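/- Fix an n×d real matrix A with ‖AᵀA‖ < 1 (spectral norm). If a vector w ∈ ℝᵈ is orthogonal to ker(A), then (I − AᵀA)w is also orthogonal to ker(A), and ‖(I − AᵀA)w‖₂ ≤ (1 − σ⁺min(AᵀA)) · ‖w‖₂, where σ⁺min(AᵀA) denotes the smallest non-zero singular value of AᵀA. -/

import Mathlib

/-! Diagonalise the positive semidefinite matrix `AᵀA` in an orthonormal eigenbasis. An eigenvector
with eigenvalue `0` lies in `ker A`, so `w` has no component along it. Every other eigenvalue `μ`
satisfies `σ⁺min(AᵀA) ≤ μ ≤ ‖AᵀA‖ < 1`, so `I - AᵀA` multiplies each remaining component of `w` by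
`1 - μ ∈ [0, 1 - σ⁺min(AᵀA)]`, and Parseval's identity turns this into the norm bound. -/

open Matrix MeasureTheory ProbabilityTheory Filter
open scoped BigOperators

noncomputable section

/-- Euclidean norm of a vector in `Fin n → ℝ`. -/
def l2norm {n : ℕ} (v : Fin n → ℝ) : ℝ := Real.sqrt (∑ i, (v i) ^ 2)

/-- Spectral norm (ℓ²-operator norm) of a real matrix. -/
def specNorm {m n : ℕ} (A : Matrix (Fin m) (Fin n) ℝ) : ℝ :=
  sSup {c : ℝ | ∃ v : Fin n → ℝ, l2norm v = 1 ∧ c = l2norm (A *ᵥ v)}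

/-- The smallest non-zero singular value of a real matrix:
the infimum of all positive `s` such that `s ^ 2` is an eigenvalue of `AᵀA`. -/
def sigmaMinPos {m n : ℕ} (A : Matrix (Fin m) (Fin n) ℝ) : ℝ :=
  sInf {s : ℝ | 0 < s ∧ ∃ v : Fin n → ℝ, v ≠ 0 ∧ (Aᵀ * A) *ᵥ v = (s ^ 2) • v}

/-- `B` is the Moore–Penrose pseudo-inverse of `A` (the four Penrose conditions). -/
def IsMoorePenrose {m n : ℕ} (A : Matrix (Fin m) (Fin n) ℝ)
    (B : Matrix (Fin n) (Fin m) ℝ) : Prop :=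
  A * B * A = A ∧ B * A * B = B ∧ (A * B)ᵀ = A * B ∧ (B * A)ᵀ = B * A

/-- `w` lies in the orthogonal complement of `ker A`. -/
def perpKer {m n : ℕ} (A : Matrix (Fin m) (Fin n) ℝ) (w : Fin n → ℝ) : Prop :=
  ∀ v : Fin n → ℝ, A *ᵥ v = 0 → w ⬝ᵥ v = 0

/-- Entrywise expectation of a random matrix. -/
def matExp {Ω : Type*} [MeasurableSpace Ω] (μ : Measure Ω) {m n : ℕ}
    (M : Ω → Matrix (Fin m) (Fin n) ℝ) : Matrix (Fin m) (Fin n) ℝ :=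
  Matrix.of fun i j => ∫ ω, M ω i j ∂μ

/-- Entrywise expectation of a random vector. -/
def vecExp {Ω : Type*} [MeasurableSpace Ω] (μ : Measure Ω) {n : ℕ}
    (v : Ω → Fin n → ℝ) : Fin n → ℝ :=
  fun i => ∫ ω, v ω i ∂μ

open scoped RealInnerProductSpace

lemma l2norm_eq_norm {n : ℕ} (v : Fin n → ℝ) : l2norm v = ‖WithLp.toLp 2 v‖ := by
  simp [l2norm, EuclideanSpace.norm_eq, sq_abs]

lemma l2norm_smul {n : ℕ} (c : ℝ) (v : Fin n → ℝ) : l2norm (c • v) = |c| * l2norm v := by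
  simp [l2norm_eq_norm, norm_smul]

lemma l2norm_mulVec_le_specNorm {m n : ℕ} (A : Matrix (Fin m) (Fin n) ℝ) {v : Fin n → ℝ}
    (hv : l2norm v = 1) :
    l2norm (A *ᵥ v) ≤ specNorm A := by
  open scoped Matrix.Norms.L2Operator in
  have hbdd : BddAbove {c : ℝ | ∃ v : Fin n → ℝ, l2norm v = 1 ∧ c = l2norm (A *ᵥ v)} := by
    refine ⟨‖A‖, ?_⟩
    rintro _ ⟨u, hu, rfl⟩
    rw [l2norm_eq_norm] at hu ⊢
    simpa [hu] using A.l2_opNorm_mulVec (WithLp.toLp 2 u)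
  exact le_csSup hbdd ⟨v, hv, rfl⟩

section perpKer

variable {m n : ℕ} {A : Matrix (Fin m) (Fin n) ℝ}

lemma perpKer_transpose_mulVec (A : Matrix (Fin m) (Fin n) ℝ) (u : Fin m → ℝ) :
    perpKer A (Aᵀ *ᵥ u) := fun v hv => by
  rw [mulVec_transpose, ← dotProduct_mulVec, hv, dotProduct_zero]

lemma perpKer.sub {v w : Fin n → ℝ} (hv : perpKer A v) (hw : perpKer A w) :
    perpKer A (v - w) := fun u hu => by
  rw [sub_dotProduct, hv u hu, hw u hu, sub_zero]

lemma perpKer.one_sub_transpose_mul_mulVec {w : Fin n → ℝ} (hw : perpKer A w) :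
    perpKer A ((1 - Aᵀ * A) *ᵥ w) := by
  rw [sub_mulVec, one_mulVec, ← mulVec_mulVec]
  exact hw.sub (perpKer_transpose_mulVec A _)

end perpKer

lemma norm_le_of_abs_inner_le {ι E : Type*} [Fintype ι] [NormedAddCommGroup E]
    [InnerProductSpace ℝ E] (b : OrthonormalBasis ι ℝ E) {x y : E} {c : ℝ}
    (h : ∀ i, |⟪b i, y⟫| ≤ c * |⟪b i, x⟫|) : ‖y‖ ≤ c * ‖x‖ := by
  have hsq : ‖y‖ ^ 2 ≤ (c * ‖x‖) ^ 2 := by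
    rw [mul_pow, ← b.sum_sq_inner_right, ← b.sum_sq_inner_right, Finset.mul_sum]
    refine Finset.sum_le_sum fun i _ => ?_
    rw [← sq_abs, ← sq_abs ⟪b i, x⟫, ← mul_pow]
    exact pow_le_pow_left₀ (abs_nonneg _) (h i) 2
  rcases le_or_gt 0 c with hc | hc
  · exact pow_le_pow_iff_left₀ (norm_nonneg y) (by positivity) two_ne_zero |>.1 hsq
  · have hx : ‖x‖ = 0 := by
      have hcoeff (i : ι) : ⟪b i, x⟫ = 0 := abs_nonpos_iff.1 <|
        nonpos_of_mul_nonneg_right ((abs_nonneg _).trans (h i)) hc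
      simpa [hcoeff] using (b.sum_sq_inner_right x).symm
    rw [hx, mul_zero] at hsq ⊢
    nlinarith [norm_nonneg y]

namespace Matrix.IsHermitian

variable {d : ℕ} {M : Matrix (Fin d) (Fin d) ℝ}

lemma transpose_eq (hM : M.IsHermitian) : Mᵀ = M :=
  (conjTranspose_eq_transpose_of_trivial M).symm.trans hM.eq

variable (hM : M.IsHermitian)

lemma inner_eigenvectorBasis_mulVec (j : Fin d) (x : Fin d → ℝ) :
    ⟪hM.eigenvectorBasis j, WithLp.toLp 2 (M *ᵥ x)⟫
      = hM.eigenvalues j * ⟪hM.eigenvectorBasis j, WithLp.toLp 2 x⟫ := by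
  simp only [EuclideanSpace.inner_eq_star_dotProduct, star_trivial]
  rw [dotProduct_comm, dotProduct_mulVec, ← mulVec_transpose, hM.transpose_eq,
    hM.mulVec_eigenvectorBasis, smul_dotProduct, dotProduct_comm, smul_eq_mul]

lemma abs_eigenvalues_le_specNorm (j : Fin d) : |hM.eigenvalues j| ≤ specNorm M := by
  have hb : l2norm (hM.eigenvectorBasis j).ofLp = 1 := by
    rw [l2norm_eq_norm]
    exact hM.eigenvectorBasis.orthonormal.1 j
  simpa only [hM.mulVec_eigenvectorBasis, l2norm_smul, hb, mul_one] using
    l2norm_mulVec_le_specNorm M hb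

lemma sigmaMinPos_le_eigenvalues {j : Fin d} (hj : 0 < hM.eigenvalues j) :
    sigmaMinPos M ≤ hM.eigenvalues j := by
  refine csInf_le ⟨0, fun s hs => hs.1.le⟩ ⟨hj, (hM.eigenvectorBasis j).ofLp, ?_, ?_⟩
  · exact (WithLp.ofLp_eq_zero 2).not.2 (hM.eigenvectorBasis.orthonormal.ne_zero j)
  · rw [hM.transpose_eq, ← mulVec_mulVec, hM.mulVec_eigenvectorBasis, mulVec_smul,
      hM.mulVec_eigenvectorBasis, smul_smul, sq]

end Matrix.IsHermitian

lemma perpKer.inner_eigenvectorBasis_eq_zero {n d : ℕ} {A : Matrix (Fin n) (Fin d) ℝ}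
    {w : Fin d → ℝ} (hw : perpKer A w) (hM : (Aᵀ * A).IsHermitian) {j : Fin d}
    (hj : hM.eigenvalues j = 0) : ⟪hM.eigenvectorBasis j, WithLp.toLp 2 w⟫ = 0 := by
  have hker : (hM.eigenvectorBasis j).ofLp ∈ LinearMap.ker (Aᵀ * A).mulVecLin := by
    rw [LinearMap.mem_ker, mulVecLin_apply, hM.mulVec_eigenvectorBasis, hj, zero_smul]
  rw [ker_mulVecLin_transpose_mul_self] at hker
  exact hw _ hker

/-- fixed-point contraction lemma.
If `‖AᵀA‖ < 1` and `w ⊥ ker A`, then `(I - AᵀA) w ⊥ ker A` and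
`‖(I - AᵀA) w‖₂ ≤ (1 - σ⁺min(AᵀA)) ‖w‖₂`. -/
theorem randomly_weighted_gd_stmt1 {n d : ℕ}
    (A : Matrix (Fin n) (Fin d) ℝ)
    (hA : specNorm (Aᵀ * A) < 1)
    (w : Fin d → ℝ) (hw : perpKer A w) :
    perpKer A (((1 : Matrix (Fin d) (Fin d) ℝ) - Aᵀ * A) *ᵥ w) ∧
      l2norm (((1 : Matrix (Fin d) (Fin d) ℝ) - Aᵀ * A) *ᵥ w)
        ≤ (1 - sigmaMinPos (Aᵀ * A)) * l2norm w := by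
  refine ⟨hw.one_sub_transpose_mul_mulVec, ?_⟩
  have hM : (Aᵀ * A).IsHermitian :=
    conjTranspose_eq_transpose_of_trivial A ▸ isHermitian_conjTranspose_mul_self A
  rw [l2norm_eq_norm, l2norm_eq_norm]
  refine norm_le_of_abs_inner_le hM.eigenvectorBasis fun j => ?_
  rw [sub_mulVec, one_mulVec, WithLp.toLp_sub, inner_sub_right, hM.inner_eigenvectorBasis_mulVec,
    ← one_sub_mul, abs_mul]
  rcases eq_or_ne ⟪hM.eigenvectorBasis j, WithLp.toLp 2 w⟫ 0 with h0 | h0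
  · simp [h0]
  have hpos : 0 < hM.eigenvalues j :=
    (eigenvalues_conjTranspose_mul_self_nonneg A j).lt_of_ne'
      (mt (hw.inner_eigenvectorBasis_eq_zero hM) h0)
  have hlt : hM.eigenvalues j < 1 :=
    (le_abs_self _).trans_lt ((hM.abs_eigenvalues_le_specNorm j).trans_lt hA)
  rw [abs_of_pos (sub_pos.2 hlt)]
  gcongr
  exact hM.sigmaMinPos_le_eigenvalues hpos
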